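/- Every pivot operator v_i (i ∈ ℕ) lies in the (not necessarily unital) associative K-subalgebra A = Alg(v₀, v₁, v₂) of End_K(Λ) generated by v₀, v₁, v₂; moreover the family (v_i)_{i∈ℕ} is linearly independent over K, so the subalgebra A is infinite-dimensional over K. -/

import Mathlib

/-- The Grassmann algebra `Λ(x_i ∣ i ≥ 0)`: the exterior algebra over `K` of the free
`K`-module with basis indexed by `ℕ`. -/
noncomputable abbrev GrassmannAlgebra (K : Type*) [Field K] :=
  ExteriorAlgebra K (ℕ →₀ K)

/-- The `i`-th Grassmann generator `x_i ∈ Λ`. -/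
noncomputable def grassGen (K : Type*) [Field K] (i : ℕ) : GrassmannAlgebra K :=
  ExteriorAlgebra.ι K (Finsupp.single i 1)

/-- The operator of left multiplication by `x_i` on `Λ`. -/
noncomputable def grassMul (K : Type*) [Field K] (i : ℕ) :
    Module.End K (GrassmannAlgebra K) :=
  LinearMap.mulLeft K (grassGen K i)

/-!
In `End_K(Λ)` a pivot operator `v_j` anticommutes with `x_i` and `∂_i` for `i < j`: for such an
operator `X`, the anticommutator `v_N X + X v_N` is `x_N x_{N+1}` times the anticommutator at
`N + 3`, and it vanishes on any fixed element of `Λ` once `N` is large, so it is zero. With these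
relations and `∂_i² = 0` (`∂_i²` commutes with every `x_j` and kills `1`), a short computation
gives `v_i² = x_{i+1} v_{i+3}` and `v_{i+1} x_{i+1} + x_{i+1} v_{i+1} = 1`, whence
`v_{i+3} = v_{i+1} v_i² - v_i² v_{i+1}`, and induction puts every `v_i` in `Alg(v₀, v₁, v₂)`.
Since `v_j x_m = ∂_j x_m + x_j x_{j+1} v_{j+3} x_m`, the augmentation `ε(v_j x_m)` is `δ_{jm}`, so
the functionals `T ↦ ε(T x_m)` are dual to the `v_j`, which are therefore linearly independent.
-/

open Filter

section RingLemmas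

variable {R : Type*} [Ring R]

theorem commute_mul_of_mul_eq_neg {a b c : R} (hb : a * b = -(b * a)) (hc : a * c = -(c * a)) :
    Commute a (b * c) :=
  calc a * (b * c) = -(b * (a * c)) := by rw [← mul_assoc, hb, neg_mul, mul_assoc]
    _ = b * c * a := by rw [hc, mul_neg, neg_neg, mul_assoc]

theorem commute_mul_self_of_mul_add_mul_eq {a b c : R} (h : a * b + b * a = c)
    (hc : Commute a c) : Commute (a * a) b := by
  have h' : a * b = c - b * a := eq_sub_of_add_eq h
  calc a * a * b = a * (c - b * a) := by rw [mul_assoc, h']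
    _ = c * a - (a * b) * a := by rw [mul_sub, hc.eq, mul_assoc]
    _ = c * a - (c - b * a) * a := by rw [h']
    _ = b * (a * a) := by noncomm_ring

theorem mul_add_mul_eq_of_eq_add_mul {a d p b X : R} (ha : a = d + p * b)
    (hd : d * X + X * d = 0) (hp : Commute X p) :
    a * X + X * a = p * (b * X + X * b) := by
  calc a * X + X * a = (d * X + X * d) + p * (b * X + X * b) + (X * p - p * X) * b := by
        rw [ha]; noncomm_ring
    _ = p * (b * X + X * b) := by rw [hd, hp.eq]; noncomm_ring

end RingLemmas

theorem mem_nonUnitalAdjoin_of_add_three_eq {K A : Type*} [CommRing K] [Ring A] [Algebra K A]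
    {v : ℕ → A} (h : ∀ i, v (i + 3) = v (i + 1) * (v i * v i) - v i * v i * v (i + 1))
    (i : ℕ) : v i ∈ NonUnitalAlgebra.adjoin K {v 0, v 1, v 2} := by
  induction i using Nat.strong_induction_on with
  | _ i ih =>
    match i, ih with
    | 0, _ | 1, _ | 2, _ => exact NonUnitalAlgebra.subset_adjoin K (by simp)
    | j + 3, ih =>
      have h0 := ih j (by omega)
      have h1 := ih (j + 1) (by omega)
      rw [h j]
      exact sub_mem (mul_mem h1 (mul_mem h0 h0)) (mul_mem (mul_mem h0 h0) h1)

theorem NonUnitalSubalgebra.not_finite_of_linearIndependent {K A ι : Type*} [Field K] [Ring A]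
    [Algebra K A] [Infinite ι] (S : NonUnitalSubalgebra K A) {v : ι → A}
    (hv : LinearIndependent K v) (hmem : ∀ i, v i ∈ S) : ¬ Module.Finite K S := fun _ =>
  Module.Finite.not_linearIndependent_of_infinite (fun i => (⟨v i, hmem i⟩ : S))
    (LinearIndependent.of_comp S.toSubmodule.subtype hv)

/-- The relations among `x_i`, `∂_i`, `v_i` used by the algebraic part of the argument; the last
two say that `v_j` involves only the `x_k`, `∂_k` with `k ≥ j`. -/
structure IsPivotFamily {R : Type*} [Ring R] (x d v : ℕ → R) : Prop where
  gen_mul_gen : ∀ i j, x i * x j = -(x j * x i)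
  gen_mul_self : ∀ i, x i * x i = 0
  contr_mul_gen_add : ∀ i j, d i * x j + x j * d i = if i = j then 1 else 0
  contr_mul_self : ∀ i, d i * d i = 0
  pivot_eq : ∀ i, v i = d i + x i * x (i + 1) * v (i + 3)
  pivot_mul_gen : ∀ i j, i < j → v j * x i = -(x i * v j)
  pivot_mul_contr : ∀ i j, i < j → v j * d i = -(d i * v j)

namespace IsPivotFamily

variable {R : Type*} [Ring R] {x d v : ℕ → R}

theorem gen_mul_gen_mul_self (h : IsPivotFamily x d v) (i j : ℕ) : x i * x j * x i = 0 := by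
  rw [mul_assoc, h.gen_mul_gen j i, mul_neg, ← mul_assoc, h.gen_mul_self, zero_mul, neg_zero]

theorem commute_pivot_gen_mul_gen (h : IsPivotFamily x d v) {i j k : ℕ} (hi : i < k)
    (hj : j < k) : Commute (v k) (x i * x j) :=
  commute_mul_of_mul_eq_neg (h.pivot_mul_gen i k hi) (h.pivot_mul_gen j k hj)

theorem pivot_mul_gen_self_add (h : IsPivotFamily x d v) (i : ℕ) :
    v i * x i + x i * v i = 1 := by
  calc v i * x i + x i * v i
      = (d i * x i + x i * d i) + x i * x (i + 1) * (v (i + 3) * x i)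
          + x i * x i * (x (i + 1) * v (i + 3)) := by
        rw [h.pivot_eq i]; noncomm_ring
    _ = 1 := by
        rw [h.contr_mul_gen_add, if_pos rfl, h.pivot_mul_gen i (i + 3) (by omega), mul_neg,
          ← mul_assoc, h.gen_mul_gen_mul_self, h.gen_mul_self]
        simp

theorem pivot_mul_self (h : IsPivotFamily x d v) (i : ℕ) :
    v i * v i = x (i + 1) * v (i + 3) := by
  have hvP := (h.commute_pivot_gen_mul_gen (k := i + 3) (i := i) (j := i + 1)
    (by omega) (by omega)).eq
  calc v i * v i
      = d i * d i + (d i * x i + x i * d i) * x (i + 1) * v (i + 3)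
          - x i * (d i * x (i + 1) + x (i + 1) * d i) * v (i + 3)
          + x i * x (i + 1) * (v (i + 3) * d i + d i * v (i + 3))
          + x i * x (i + 1) * (v (i + 3) * (x i * x (i + 1))) * v (i + 3) := by
        conv_lhs => rw [h.pivot_eq i]
        noncomm_ring
    _ = x (i + 1) * v (i + 3)
          + x i * x (i + 1) * x i * (x (i + 1) * v (i + 3) * v (i + 3)) := by
        rw [h.contr_mul_self, h.contr_mul_gen_add, h.contr_mul_gen_add, if_pos rfl,
          if_neg (by omega), h.pivot_mul_contr i (i + 3) (by omega), hvP]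
        noncomm_ring
    _ = x (i + 1) * v (i + 3) := by rw [h.gen_mul_gen_mul_self, zero_mul, add_zero]

theorem pivot_add_three (h : IsPivotFamily x d v) (i : ℕ) :
    v (i + 3) = v (i + 1) * (v i * v i) - v i * v i * v (i + 1) := by
  have hanti : v (i + 1) * v (i + 3) + v (i + 3) * v (i + 1)
      = x (i + 1) * x (i + 2) * (v (i + 4) * v (i + 3) + v (i + 3) * v (i + 4)) :=
    mul_add_mul_eq_of_eq_add_mul (h.pivot_eq (i + 1))
      (by rw [h.pivot_mul_contr (i + 1) (i + 3) (by omega), add_neg_cancel])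
      (h.commute_pivot_gen_mul_gen (by omega) (by omega))
  symm
  calc v (i + 1) * (v i * v i) - v i * v i * v (i + 1)
      = (v (i + 1) * x (i + 1) + x (i + 1) * v (i + 1)) * v (i + 3)
          - x (i + 1) * (v (i + 1) * v (i + 3) + v (i + 3) * v (i + 1)) := by
        rw [h.pivot_mul_self]; noncomm_ring
    _ = v (i + 3) := by
        rw [h.pivot_mul_gen_self_add, hanti, ← mul_assoc, ← mul_assoc, h.gen_mul_self]
        simp

end IsPivotFamily

section EndomorphismFamilies

variable {R M : Type*} [Semiring R] [AddCommGroup M] [Module R M]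

theorem eq_zero_of_eq_mul_add_three {f g : ℕ → Module.End R M} {m : ℕ}
    (hrec : ∀ j, m ≤ j → f j = g j * f (j + 3)) (hev : ∀ w, ∀ᶠ N in atTop, f N w = 0)
    {j : ℕ} (hj : m ≤ j) : f j = 0 := by
  ext w
  obtain ⟨n, hn⟩ := eventually_atTop.1 (hev w)
  suffices ∀ k j, m ≤ j → n ≤ j + 3 * k → f j w = 0 from this n j hj (by omega)
  intro k
  induction k with
  | zero => exact fun j _ hnj => hn j (by omega)
  | succ k ih =>
    intro j hmj hnj
    rw [hrec j hmj, Module.End.mul_apply, ih (j + 3) (by omega) (by omega), map_zero]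

theorem pivot_mul_add_mul_eq_zero {x d v : ℕ → Module.End R M}
    (hv : ∀ i, v i = d i + x i * x (i + 1) * v (i + 3))
    (hloc : ∀ w, ∀ᶠ N in atTop, v N w = 0) {X : Module.End R M} {m : ℕ}
    (hd : ∀ J, m ≤ J → d J * X + X * d J = 0) (hx : ∀ J, m ≤ J → Commute X (x J * x (J + 1)))
    {j : ℕ} (hj : m ≤ j) : v j * X + X * v j = 0 :=
  eq_zero_of_eq_mul_add_three (f := fun N => v N * X + X * v N)
    (fun J hJ => mul_add_mul_eq_of_eq_add_mul (hv J) (hd J hJ) (hx J hJ))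
    (fun w => ((hloc (X w)).and (hloc w)).mono fun N hN => by simp [hN.1, hN.2]) hj

end EndomorphismFamilies

section Grassmann

variable {K : Type*} [Field K]

theorem grassMul_eq_lmul (i : ℕ) :
    grassMul K i = Algebra.lmul K (GrassmannAlgebra K) (grassGen K i) := rfl

theorem grassMul_mul_grassMul (i j : ℕ) :
    grassMul K i * grassMul K j = -(grassMul K j * grassMul K i) := by
  simp only [grassMul_eq_lmul, ← map_mul, ← map_neg]
  exact congrArg _ (eq_neg_of_add_eq_zero_left (ExteriorAlgebra.ι_add_mul_swap _ _))

theorem grassMul_mul_self (i : ℕ) : grassMul K i * grassMul K i = 0 := by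
  rw [grassMul_eq_lmul, ← map_mul, grassGen, ExteriorAlgebra.ι_sq_zero, map_zero]

theorem adjoin_range_grassGen : Algebra.adjoin K (Set.range (grassGen K)) = ⊤ := by
  rw [eq_top_iff, ← CliffordAlgebra.adjoin_range_ι (Q := (0 : QuadraticForm K (ℕ →₀ K)))]
  refine Algebra.adjoin_le fun _ ⟨x, hx⟩ => hx ▸ Algebra.span_le_adjoin K _ ?_
  have hspan := (Finsupp.basisSingleOne (R := K) (ι := ℕ)).mem_span x
  rw [Finsupp.coe_basisSingleOne] at hspan
  have := Submodule.apply_mem_span_image_of_mem_span (ExteriorAlgebra.ι K) hspan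
  rwa [← Set.range_comp] at this

theorem eventually_mem_adjoin_grassGen_lt (w : GrassmannAlgebra K) :
    ∀ᶠ n in atTop, w ∈ Algebra.adjoin K (grassGen K '' {j | j < n}) := by
  have hw : w ∈ Algebra.adjoin K (Set.range (grassGen K)) := by
    rw [adjoin_range_grassGen]; trivial
  induction hw using Algebra.adjoin_induction with
  | mem _ hx =>
    obtain ⟨j, rfl⟩ := hx
    exact (eventually_gt_atTop j).mono fun _ hn => Algebra.subset_adjoin ⟨j, hn, rfl⟩
  | algebraMap r => exact Eventually.of_forall fun _ => Subalgebra.algebraMap_mem _ r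
  | add _ _ _ _ ha hb => exact (ha.and hb).mono fun _ h => add_mem h.1 h.2
  | mul _ _ _ _ ha hb => exact (ha.and hb).mono fun _ h => mul_mem h.1 h.2

theorem eq_zero_of_commute_grassMul {T : Module.End K (GrassmannAlgebra K)}
    (hT : ∀ j, Commute T (grassMul K j)) (h1 : T 1 = 0) : T = 0 := by
  have hcomm : ∀ w, Commute T (Algebra.lmul K (GrassmannAlgebra K) w) := by
    have : Algebra.adjoin K (Set.range (grassGen K)) ≤
        (Subalgebra.centralizer K {T}).comap (Algebra.lmul K (GrassmannAlgebra K)) :=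
      Algebra.adjoin_le <| Set.range_subset_iff.2 fun j =>
        Subalgebra.mem_centralizer_iff K |>.2 fun _ hS => hS ▸ (hT j).eq
    intro w
    have hw : Algebra.lmul K _ w ∈ Subalgebra.centralizer K {T} :=
      this (by rw [adjoin_range_grassGen]; trivial)
    exact (Subalgebra.mem_centralizer_iff K).1 hw T rfl
  refine LinearMap.ext fun w => ?_
  simpa [h1] using LinearMap.congr_fun (hcomm w) 1

theorem algebraMapInv_grassGen (i : ℕ) : ExteriorAlgebra.algebraMapInv (grassGen K i) = 0 := by
  simp [grassGen, ExteriorAlgebra.algebraMapInv]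

end Grassmann

section Pivot

variable {K : Type*} [Field K] {d v : ℕ → Module.End K (GrassmannAlgebra K)}

theorem eventually_pivot_apply_eq_zero
    (hv0 : ∀ i : ℕ, ∀ w ∈ Algebra.adjoin K (grassGen K '' {j : ℕ | j < i}), v i w = 0)
    (w : GrassmannAlgebra K) : ∀ᶠ N in atTop, v N w = 0 :=
  (eventually_mem_adjoin_grassGen_lt w).mono fun N => hv0 N w

theorem isPivotFamily_grassMul
    (hd : ∀ i j : ℕ, d i * grassMul K j + grassMul K j * d i = if i = j then 1 else 0)
    (hd1 : ∀ i : ℕ, d i (1 : GrassmannAlgebra K) = 0)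
    (hdd : ∀ i j : ℕ, d i * d j + d j * d i = 0)
    (hv : ∀ i : ℕ, v i = d i + grassMul K i * grassMul K (i + 1) * v (i + 3))
    (hv0 : ∀ i : ℕ, ∀ w ∈ Algebra.adjoin K (grassGen K '' {j : ℕ | j < i}), v i w = 0) :
    IsPivotFamily (grassMul K) d v where
  gen_mul_gen := grassMul_mul_grassMul
  gen_mul_self := grassMul_mul_self
  contr_mul_gen_add := hd
  contr_mul_self i := eq_zero_of_commute_grassMul
    (fun j => commute_mul_self_of_mul_add_mul_eq (hd i j) (by split_ifs <;> simp))
    (by simp [hd1])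
  pivot_eq := hv
  pivot_mul_gen i j hij := eq_neg_of_add_eq_zero_left <|
    pivot_mul_add_mul_eq_zero hv (eventually_pivot_apply_eq_zero hv0)
      (fun J hJ => by rw [hd, if_neg (by omega)])
      (fun J _ => commute_mul_of_mul_eq_neg (grassMul_mul_grassMul _ _)
        (grassMul_mul_grassMul _ _)) hij
  pivot_mul_contr i j hij := eq_neg_of_add_eq_zero_left <|
    pivot_mul_add_mul_eq_zero hv (eventually_pivot_apply_eq_zero hv0) (fun J _ => hdd J i)
      (fun J hJ => commute_mul_of_mul_eq_neg
        (eq_neg_of_add_eq_zero_left (by rw [hd, if_neg (by omega)]))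
        (eq_neg_of_add_eq_zero_left (by rw [hd, if_neg (by omega)]))) hij

theorem contr_apply_grassGen
    (hd : ∀ i j : ℕ, d i * grassMul K j + grassMul K j * d i = if i = j then 1 else 0)
    (hd1 : ∀ i : ℕ, d i (1 : GrassmannAlgebra K) = 0) (i j : ℕ) :
    d i (grassGen K j) = if i = j then 1 else 0 := by
  split_ifs with hij <;> simpa [grassMul, hd1, hij] using LinearMap.congr_fun (hd i j) 1

theorem algebraMapInv_pivot_apply_grassGen
    (hd : ∀ i j : ℕ, d i * grassMul K j + grassMul K j * d i = if i = j then 1 else 0)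
    (hd1 : ∀ i : ℕ, d i (1 : GrassmannAlgebra K) = 0)
    (hv : ∀ i : ℕ, v i = d i + grassMul K i * grassMul K (i + 1) * v (i + 3)) (i j : ℕ) :
    ExteriorAlgebra.algebraMapInv (v i (grassGen K j)) = if i = j then 1 else 0 := by
  rw [hv i]
  simp [contr_apply_grassGen hd hd1, grassMul, algebraMapInv_grassGen, apply_ite]

theorem linearIndependent_pivot
    (hd : ∀ i j : ℕ, d i * grassMul K j + grassMul K j * d i = if i = j then 1 else 0)
    (hd1 : ∀ i : ℕ, d i (1 : GrassmannAlgebra K) = 0)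
    (hv : ∀ i : ℕ, v i = d i + grassMul K i * grassMul K (i + 1) * v (i + 3)) :
    LinearIndependent K v := by
  refine LinearIndependent.of_pairwise_dual_eq_zero_one v
    (fun j => ExteriorAlgebra.algebraMapInv.toLinearMap ∘ₗ LinearMap.applyₗ (grassGen K j))
    (fun j i hji => ?_) (fun j => ?_)
  · simpa [algebraMapInv_pivot_apply_grassGen hd hd1 hv] using hji.symm
  · simp [algebraMapInv_pivot_apply_grassGen hd hd1 hv]

end Pivot

/-- Every pivot operator `v_i` lies in the (not necessarily unital) associative
`K`-subalgebra `A = Alg(v₀, v₁, v₂)` of `End_K(Λ)` generated by `v₀, v₁, v₂`; moreover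
the family `(v_i)` is linearly independent over `K`, so `A` is not finite-dimensional
over `K`.  Here `∂_i` is the contraction characterized by `∂_i x_j + x_j ∂_i = δ_{ij}`,
`∂_i(1)=0`, `∂_i ∂_j + ∂_j ∂_i = 0`, and the pivot operators `v_i` are characterized by
the recursion `v_i = ∂_i + x_i x_{i+1} v_{i+3}` together with the fact that `v_i` kills
the subalgebra generated by the `x_j` with `j < i`. -/
theorem stmt_19 (K : Type*) [Field K]
    (d v : ℕ → Module.End K (GrassmannAlgebra K))
    (hd : ∀ i j : ℕ, d i * grassMul K j + grassMul K j * d i = if i = j then 1 else 0)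
    (hd1 : ∀ i : ℕ, d i (1 : GrassmannAlgebra K) = 0)
    (hdd : ∀ i j : ℕ, d i * d j + d j * d i = 0)
    (hv : ∀ i : ℕ, v i = d i + grassMul K i * grassMul K (i + 1) * v (i + 3))
    (hv0 : ∀ i : ℕ, ∀ w ∈ Algebra.adjoin K (grassGen K '' {j : ℕ | j < i}), v i w = 0) :
    (∀ i : ℕ, v i ∈ NonUnitalAlgebra.adjoin K
        ({v 0, v 1, v 2} : Set (Module.End K (GrassmannAlgebra K)))) ∧
    LinearIndependent K v ∧
    ¬ Module.Finite K (NonUnitalAlgebra.adjoin K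
        ({v 0, v 1, v 2} : Set (Module.End K (GrassmannAlgebra K)))) := by
  have hpivot := isPivotFamily_grassMul hd hd1 hdd hv hv0
  have hmem := mem_nonUnitalAdjoin_of_add_three_eq (K := K) hpivot.pivot_add_three
  have hli := linearIndependent_pivot hd hd1 hv
  exact ⟨hmem, hli, NonUnitalSubalgebra.not_finite_of_linearIndependent _ hli hmem⟩
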